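/- arXiv:2308.13025 — 2 statements merged into one kernel-verified Lean document; each statement's English description precedes it below -/
import Mathlib

section
/- For any pair (m, r) with m an integer larger than 1 and r ∈ {0, 1, 2, …, m}, there exist a positive integer l and a Clifford system P_1, …, P_m of signature (m, r) on ℝ^{2l}_l (i.e. with s = l, the neutral pseudo-inner product). -/
open Matrix

noncomputable section

/-- Entries of the signature matrix `J_{r,m-r}`, with 1-based indices:
`η_{ii} = -1` for `1 ≤ i ≤ r` and `η_{ii} = 1` for `r < i`; off-diagonal entries vanish. -/
def cliffEta (r i j : ℕ) : ℝ :=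
  if i = j then (if i ≤ r then -1 else 1) else 0

/-- The matrix `J_{s,n-s} = diag(-E_s, E_{n-s})`. -/
def psJ (n s : ℕ) : Matrix (Fin n) (Fin n) ℝ :=
  Matrix.diagonal fun i => if (i : ℕ) < s then (-1 : ℝ) else 1

/-- The pseudo-inner product `⟨u, v⟩ = uᵀ J_{s,n-s} v` of `ℝ^n_s`. -/
def psInner (n s : ℕ) (u v : Fin n → ℝ) : ℝ :=
  u ⬝ᵥ ((psJ n s) *ᵥ v)

/-- A Clifford system of signature `(m, r)` on `ℝ^{2l}_s`, indexed by `1, …, m`: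
each `P i` is symmetric with respect to the pseudo-inner product, and
`P i * P j + P j * P i = 2 η_{ij} E_{2l}`. -/
def IsCliffordSystem (l s m r : ℕ)
    (P : ℕ → Matrix (Fin (2 * l)) (Fin (2 * l)) ℝ) : Prop :=
  (∀ i ∈ Finset.Icc 1 m, (P i)ᵀ = psJ (2 * l) s * P i * psJ (2 * l) s) ∧
  (∀ i ∈ Finset.Icc 1 m, ∀ j ∈ Finset.Icc 1 m,
    P i * P j + P j * P i
      = (2 * cliffEta r i j) • (1 : Matrix (Fin (2 * l)) (Fin (2 * l)) ℝ))

/-!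
Jordan–Wigner: if `Q₁, …, Qₘ` is an orthogonal Clifford family on `ℝⁿ` (each `Qᵢ` symmetric or
antisymmetric according as `Qᵢ² = 1` or `Qᵢ² = -1`), then `Qᵢ ⊗ D` (`i ≤ m`) together with
`1 ⊗ Y`, where `D = diag(-1, 1)` and `Y = [[0, 1], [η, 0]]`, is one on `ℝ²ⁿ` with a new generator
of square `η`. Starting from the empty family this gives orthogonal families of every signature.
Then `Pᵢ = Xᵢ ⊗ Qᵢ`, with `Xᵢ = 1` for positive and `Xᵢ = [[0, 1], [1, 0]]` for negative
generators, is a Clifford system on `ℝ²ⁿ` with `J = D ⊗ 1 = diag(-Eₙ, Eₙ)`: conjugation by `D`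
fixes `1` and negates the swap, which is exactly the sign in `Qᵢᵀ = ±Qᵢ`.
-/

open Kronecker

theorem cliffEta_self_mul_self (r i : ℕ) : cliffEta r i i * cliffEta r i i = 1 := by
  simp only [cliffEta, if_true]; split_ifs <;> norm_num

theorem cliffEta_of_ne (r : ℕ) {i j : ℕ} (h : i ≠ j) : cliffEta r i j = 0 := if_neg h

section TwoByTwo

def antiDiag (c : ℝ) : Matrix (Fin 2) (Fin 2) ℝ := !![0, 1; c, 0]

theorem antiDiag_mul_self (c : ℝ) : antiDiag c * antiDiag c = c • 1 := by
  ext i j; fin_cases i <;> fin_cases j <;> simp [antiDiag]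

theorem transpose_antiDiag {c : ℝ} (hc : c * c = 1) : (antiDiag c)ᵀ = c • antiDiag c := by
  ext i j; fin_cases i <;> fin_cases j <;> simp [antiDiag, hc]

theorem psJ_two_one : psJ 2 1 = !![-1, 0; 0, 1] := by
  ext i j; fin_cases i <;> fin_cases j <;> simp [psJ]

theorem psJ_two_one_mul_self : psJ 2 1 * psJ 2 1 = 1 := by
  ext i j; fin_cases i <;> fin_cases j <;> simp [psJ_two_one]

theorem psJ_two_one_anticomm_antiDiag (c : ℝ) :
    psJ 2 1 * antiDiag c + antiDiag c * psJ 2 1 = 0 := by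
  ext i j; fin_cases i <;> fin_cases j <;> simp [psJ_two_one, antiDiag]

theorem psJ_two_one_conj_antiDiag (c : ℝ) :
    psJ 2 1 * antiDiag c * psJ 2 1 = -antiDiag c := by
  ext i j; fin_cases i <;> fin_cases j <;> simp [psJ_two_one, antiDiag]

end TwoByTwo

section KroneckerAnticommutator

variable {R ι κ : Type*} [CommRing R] [Fintype ι] [Fintype κ]

theorem kronecker_anticomm_of_commute_right (A B : Matrix ι ι R) {X Y : Matrix κ κ R}
    (h : Commute X Y) :
    (A ⊗ₖ X) * (B ⊗ₖ Y) + (B ⊗ₖ Y) * (A ⊗ₖ X) = (A * B + B * A) ⊗ₖ (X * Y) := by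
  rw [← mul_kronecker_mul, ← mul_kronecker_mul, h.eq, add_kronecker]

theorem kronecker_anticomm_of_commute_left {A B : Matrix ι ι R} (X Y : Matrix κ κ R)
    (h : Commute A B) :
    (A ⊗ₖ X) * (B ⊗ₖ Y) + (B ⊗ₖ Y) * (A ⊗ₖ X) = (A * B) ⊗ₖ (X * Y + Y * X) := by
  rw [← mul_kronecker_mul, ← mul_kronecker_mul, h.eq, kronecker_add]

end KroneckerAnticommutator

section CliffordFamilies

variable {ι κ : Type*} [Fintype ι] [DecidableEq ι] [Fintype κ] [DecidableEq κ]

def CliffordRelations (m r : ℕ) (P : ℕ → Matrix ι ι ℝ) : Prop :=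
  ∀ i ∈ Finset.Icc 1 m, ∀ j ∈ Finset.Icc 1 m,
    P i * P j + P j * P i = (2 * cliffEta r i j) • (1 : Matrix ι ι ℝ)

theorem CliffordRelations.reindex {m r : ℕ} {P : ℕ → Matrix ι ι ℝ} (e : ι ≃ κ)
    (h : CliffordRelations m r P) : CliffordRelations m r fun i => reindex e e (P i) := by
  intro i hi j hj
  simp only [← coe_reindexAlgEquiv ℝ ℝ, ← map_mul, ← map_add, h i hi j hj, map_smul, map_one]

structure IsOrthogonalClifford (m r : ℕ) (Q : ℕ → Matrix ι ι ℝ) : Prop where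
  transpose_eq : ∀ i ∈ Finset.Icc 1 m, (Q i)ᵀ = cliffEta r i i • Q i
  relations : CliffordRelations m r Q

namespace IsOrthogonalClifford

variable {m r : ℕ} {Q : ℕ → Matrix ι ι ℝ}

protected theorem reindex (e : ι ≃ κ) (h : IsOrthogonalClifford m r Q) :
    IsOrthogonalClifford m r fun i => Matrix.reindex e e (Q i) where
  transpose_eq i hi := by rw [transpose_reindex, h.transpose_eq i hi]; rfl
  relations := h.relations.reindex e

theorem kronecker_succ (h : IsOrthogonalClifford m r Q) :
    IsOrthogonalClifford (m + 1) r fun i =>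
      if i ≤ m then Q i ⊗ₖ psJ 2 1 else 1 ⊗ₖ antiDiag (cliffEta r i i) := by
  constructor
  · intro i hi
    rw [Finset.mem_Icc] at hi
    by_cases him : i ≤ m
    · simp only [if_pos him, ← kroneckerMap_transpose, h.transpose_eq i (by simp [hi.1, him]),
        psJ, diagonal_transpose, smul_kronecker]
    · simp only [if_neg him, ← kroneckerMap_transpose, transpose_one,
        transpose_antiDiag (cliffEta_self_mul_self r i), kronecker_smul]
  · intro i hi j hj
    rw [Finset.mem_Icc] at hi hj
    by_cases him : i ≤ m <;> by_cases hjm : j ≤ m <;> simp only [him, hjm, if_true, if_false]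
    · rw [kronecker_anticomm_of_commute_right _ _ (Commute.refl _), psJ_two_one_mul_self,
        h.relations i (by simp [hi.1, him]) j (by simp [hj.1, hjm]), smul_kronecker,
        one_kronecker_one]
    · rw [kronecker_anticomm_of_commute_left _ _ (Commute.one_right _),
        psJ_two_one_anticomm_antiDiag, kronecker_zero, cliffEta_of_ne r (by omega), mul_zero,
        zero_smul]
    · rw [add_comm, kronecker_anticomm_of_commute_left _ _ (Commute.one_right _),
        psJ_two_one_anticomm_antiDiag, kronecker_zero, cliffEta_of_ne r (by omega), mul_zero,
        zero_smul]
    · obtain rfl : j = i := by omega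
      rw [kronecker_anticomm_of_commute_left _ _ (Commute.refl _), antiDiag_mul_self,
        ← two_smul ℝ, smul_smul, kronecker_smul, mul_one, one_kronecker_one]

end IsOrthogonalClifford

def neutralDouble (r : ℕ) (Q : ℕ → Matrix ι ι ℝ) (i : ℕ) : Matrix (Fin 2 × ι) (Fin 2 × ι) ℝ :=
  (if i ≤ r then antiDiag 1 else 1) ⊗ₖ Q i

namespace IsOrthogonalClifford

variable {m r : ℕ} {Q : ℕ → Matrix ι ι ℝ}

theorem transpose_neutralDouble (h : IsOrthogonalClifford m r Q) {i : ℕ}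
    (hi : i ∈ Finset.Icc 1 m) :
    (neutralDouble r Q i)ᵀ = (psJ 2 1 ⊗ₖ 1) * neutralDouble r Q i * (psJ 2 1 ⊗ₖ 1) := by
  rw [neutralDouble, ← kroneckerMap_transpose, h.transpose_eq i hi, ← mul_kronecker_mul,
    ← mul_kronecker_mul, one_mul, mul_one, kronecker_smul, ← smul_kronecker]
  congr 1
  by_cases hir : i ≤ r
  · simp [hir, cliffEta, transpose_antiDiag, psJ_two_one_conj_antiDiag]
  · simp [hir, cliffEta, psJ_two_one_mul_self]

theorem cliffordRelations_neutralDouble (h : IsOrthogonalClifford m r Q) :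
    CliffordRelations m r (neutralDouble r Q) := by
  intro i hi j hj
  have hcomm : Commute (if i ≤ r then antiDiag 1 else 1) (if j ≤ r then antiDiag 1 else 1) := by
    split_ifs
    exacts [Commute.refl _, Commute.one_right _, Commute.one_left _, Commute.refl _]
  rw [neutralDouble, neutralDouble, kronecker_anticomm_of_commute_left _ _ hcomm,
    h.relations i hi j hj]
  by_cases hij : i = j
  · subst hij
    have hsq : (if i ≤ r then antiDiag 1 else 1) * (if i ≤ r then antiDiag 1 else 1) = 1 := by
      split_ifs
      exacts [by rw [antiDiag_mul_self, one_smul], mul_one 1]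
    rw [hsq, kronecker_smul, one_kronecker_one]
  · rw [cliffEta_of_ne r hij, mul_zero, zero_smul, zero_smul, kronecker_zero]

end IsOrthogonalClifford

end CliffordFamilies

theorem exists_isOrthogonalClifford (m r : ℕ) :
    ∃ n, 0 < n ∧ ∃ Q : ℕ → Matrix (Fin n) (Fin n) ℝ, IsOrthogonalClifford m r Q := by
  induction m with
  | zero => exact ⟨1, one_pos, fun _ => 1, ⟨by simp, by simp [CliffordRelations]⟩⟩
  | succ m ih =>
    obtain ⟨n, hn, Q, hQ⟩ := ih
    exact ⟨n * 2, by omega, _, hQ.kronecker_succ.reindex finProdFinEquiv⟩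

theorem psJ_two_mul (n : ℕ) :
    psJ (2 * n) n =
      reindex finProdFinEquiv finProdFinEquiv (psJ 2 1 ⊗ₖ (1 : Matrix (Fin n) (Fin n) ℝ)) := by
  ext k k'
  obtain ⟨⟨a, b⟩, rfl⟩ := finProdFinEquiv.surjective k
  obtain ⟨⟨a', b'⟩, rfl⟩ := finProdFinEquiv.surjective k'
  fin_cases a <;> by_cases hb : b = b' <;> simp [psJ, diagonal_apply, one_apply, hb]

theorem IsOrthogonalClifford.isCliffordSystem {m r n : ℕ} {Q : ℕ → Matrix (Fin n) (Fin n) ℝ}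
    (h : IsOrthogonalClifford m r Q) :
    IsCliffordSystem n n m r fun i =>
      reindex finProdFinEquiv finProdFinEquiv (neutralDouble r Q i) := by
  refine ⟨fun i hi => ?_, h.cliffordRelations_neutralDouble.reindex finProdFinEquiv⟩
  rw [transpose_reindex, h.transpose_neutralDouble hi, psJ_two_mul]
  simp only [← coe_reindexAlgEquiv ℝ ℝ, map_mul]

theorem exists_clifford_system_general (m r : ℕ) :
    ∃ l : ℕ, 0 < l ∧ ∃ P : ℕ → Matrix (Fin (2 * l)) (Fin (2 * l)) ℝ,
      IsCliffordSystem l l m r P := by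
  obtain ⟨n, hn, Q, hQ⟩ := exists_isOrthogonalClifford m r
  exact ⟨n, hn, _, hQ.isCliffordSystem⟩

/-- for any `m ≥ 2` and `r ∈ {0, …, m}` there exist a positive integer `l`
and a Clifford system of signature `(m, r)` on `ℝ^{2l}_l` (the neutral pseudo-metric). -/
theorem exists_clifford_system (m r : ℕ) (hm : 2 ≤ m) (hr : r ≤ m) :
    ∃ l : ℕ, 0 < l ∧ ∃ P : ℕ → Matrix (Fin (2 * l)) (Fin (2 * l)) ℝ,
      IsCliffordSystem l l m r P :=
  exists_clifford_system_general m r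
end
end

section
/- Let P_1, …, P_m be a Clifford system of signature (m, r) on ℝ^{2l}_s with m ≡ 0 (mod 4) and r ≡ 0 (mod 2), and set P := P_1P_2⋯P_m. Let z ∈ ℝ^{2l} decompose uniquely as z = z_+ + z_− with z_+ ∈ E_+(P), z_− ∈ E_−(P). Then z ∈ M_+ if and only if ⟨z_+, z_+⟩ + ⟨z_−, z_−⟩ = 1 and ⟨P_j z_+, z_−⟩ = 0 for all j ∈ {1, …, m}. -/
/-!
Since `m ≡ 0 (mod 4)`, reversing the product `P_1 ⋯ P_m` of pairwise anticommuting factors costs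
the sign `(-1)^(m(m-1)/2) = 1`, so `P` is self-adjoint for `⟨·,·⟩` and `E_+(P) ⟂ E_-(P)`. Since `m`
is even, each `P_j` anticommutes with `P`, hence swaps `E_+(P)` and `E_-(P)`. Expanding in
`z = z_+ + z_-` then gives `⟨z, z⟩ = ⟨z_+, z_+⟩ + ⟨z_-, z_-⟩` and `⟨P_j z, z⟩ = 2 ⟨P_j z_+, z_-⟩`.
-/

open Matrix

noncomputable section

lemma IsCliffordSystem.mul_eq_neg_mul {l s m r : ℕ}
    {P : ℕ → Matrix (Fin (2 * l)) (Fin (2 * l)) ℝ} (hP : IsCliffordSystem l s m r P)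
    {i j : ℕ} (hi : i ∈ Finset.Icc 1 m) (hj : j ∈ Finset.Icc 1 m) (hij : i ≠ j) :
    P i * P j = -(P j * P i) := by
  have h := hP.2 i hi j hj
  rw [cliffEta, if_neg hij, mul_zero, zero_smul] at h
  exact eq_neg_of_add_eq_zero_left h

lemma even_choose_two_of_four_dvd {m : ℕ} (hm : 4 ∣ m) : Even (m.choose 2) := by
  obtain ⟨k, rfl⟩ := hm
  rw [Nat.choose_two_right, show 4 * k * (4 * k - 1) = 2 * (2 * k * (4 * k - 1)) by ring,
    Nat.mul_div_cancel_left _ two_pos]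
  exact (even_two_mul k).mul_right _

section AnticommutingProduct

variable {R : Type*} [Ring R] (a : ℕ → R)

def prodUpTo (n : ℕ) : R := ((List.range n).map fun k => a (1 + k)).prod

lemma prodUpTo_succ (n : ℕ) : prodUpTo a (n + 1) = prodUpTo a n * a (n + 1) := by
  simp [prodUpTo, List.range_succ, add_comm]

variable {a}

lemma mul_prodUpTo_of_anticomm {j n : ℕ}
    (h : ∀ i ∈ Finset.Icc 1 n, a j * a i = -(a i * a j)) :
    a j * prodUpTo a n = (-1 : ℤ) ^ n • (prodUpTo a n * a j) := by
  induction n with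
  | zero => simp [prodUpTo]
  | succ n ih =>
    rw [prodUpTo_succ, ← mul_assoc, ih fun i hi => h i (Finset.Icc_subset_Icc_right n.le_succ hi),
      smul_mul_assoc, mul_assoc, h (n + 1) (by simp)]
    simp [pow_succ, mul_assoc]

lemma mul_prodUpTo_of_mem {j n : ℕ} (hj : j ∈ Finset.Icc 1 n)
    (h : ∀ i ∈ Finset.Icc 1 n, i ≠ j → a j * a i = -(a i * a j)) :
    a j * prodUpTo a n = -((-1 : ℤ) ^ n • (prodUpTo a n * a j)) := by
  induction n with
  | zero => simp at hj
  | succ n ih =>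
    rw [prodUpTo_succ, ← mul_assoc]
    rcases (Finset.mem_Icc.mp hj).2.eq_or_lt with rfl | hjn
    · rw [mul_prodUpTo_of_anticomm fun i hi => h i (Finset.Icc_subset_Icc_right n.le_succ hi)
        (by simp at hi; omega)]
      simp [pow_succ, mul_assoc]
    · have hj' : j ∈ Finset.Icc 1 n := by simp at hj ⊢; omega
      rw [ih hj' fun i hi => h i (Finset.Icc_subset_Icc_right n.le_succ hi), neg_mul,
        smul_mul_assoc, mul_assoc, h (n + 1) (by simp) (by omega)]
      simp [pow_succ, mul_assoc]

end AnticommutingProduct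

lemma transpose_prodUpTo {ι α : Type*} [Fintype ι] [DecidableEq ι] [CommRing α]
    {a : ℕ → Matrix ι ι α} {J : Matrix ι ι α} (hJ : J * J = 1) {n : ℕ}
    (hsym : ∀ i ∈ Finset.Icc 1 n, (a i)ᵀ = J * a i * J)
    (hanti : ∀ i ∈ Finset.Icc 1 n, ∀ j ∈ Finset.Icc 1 n, i ≠ j → a i * a j = -(a j * a i)) :
    (prodUpTo a n)ᵀ = (-1 : ℤ) ^ n.choose 2 • (J * prodUpTo a n * J) := by
  induction n with
  | zero => simp [prodUpTo, hJ]
  | succ n ih =>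
    have hsub := Finset.Icc_subset_Icc_right (a := 1) n.le_succ
    have hlast : n + 1 ∈ Finset.Icc 1 (n + 1) := by simp
    have hconj :
        J * a (n + 1) * J * (J * prodUpTo a n * J) = J * (a (n + 1) * prodUpTo a n) * J := by
      simp only [mul_assoc]
      rw [← mul_assoc J J, hJ, one_mul]
    rw [prodUpTo_succ, transpose_mul, hsym _ hlast,
      ih (fun i hi => hsym i (hsub hi)) fun i hi j hj => hanti i (hsub hi) j (hsub hj),
      mul_smul_comm, hconj, mul_prodUpTo_of_anticomm fun i hi =>
        hanti _ hlast i (hsub hi) (by simp at hi; omega),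
      Nat.choose_succ_succ', Nat.choose_one_right, pow_add, mul_smul, mul_smul_comm,
      smul_mul_assoc]
    exact smul_comm _ _ _

section PseudoInner

variable {n s : ℕ}

lemma psJ_mul_self : psJ n s * psJ n s = 1 := by
  rw [psJ, diagonal_mul_diagonal, ← diagonal_one]
  congr 1
  funext i
  split_ifs <;> norm_num

lemma psInner_comm (u v : Fin n → ℝ) : psInner n s u v = psInner n s v u := by
  simp only [psInner, psJ, mulVec_diagonal, dotProduct]
  congr 1
  funext i
  ring

lemma psInner_add_left (u v w : Fin n → ℝ) :
    psInner n s (u + v) w = psInner n s u w + psInner n s v w := by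
  simp [psInner, add_dotProduct]

lemma psInner_add_right (u v w : Fin n → ℝ) :
    psInner n s u (v + w) = psInner n s u v + psInner n s u w := by
  simp [psInner, mulVec_add, dotProduct_add]

lemma psInner_neg_right (u v : Fin n → ℝ) : psInner n s u (-v) = -psInner n s u v := by
  simp [psInner, mulVec_neg]

variable {Q : Matrix (Fin n) (Fin n) ℝ}

lemma psInner_mulVec_left (hQ : Qᵀ = psJ n s * Q * psJ n s) (u v : Fin n → ℝ) :
    psInner n s (Q *ᵥ u) v = psInner n s u (Q *ᵥ v) := by
  unfold psInner
  rw [dotProduct_comm, dotProduct_mulVec, ← mulVec_transpose, hQ, mulVec_mulVec,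
    Matrix.mul_assoc (psJ n s * Q), psJ_mul_self, Matrix.mul_one, dotProduct_comm,
    ← mulVec_mulVec]

lemma psInner_eq_zero_of_mulVec_eq_neg (hQ : Qᵀ = psJ n s * Q * psJ n s) {u v : Fin n → ℝ}
    (hu : Q *ᵥ u = u) (hv : Q *ᵥ v = -v) : psInner n s u v = 0 := by
  have h := psInner_mulVec_left hQ u v
  rw [hu, hv, psInner_neg_right] at h
  linarith

lemma mulVec_mulVec_of_anticomm {A : Matrix (Fin n) (Fin n) ℝ} (h : A * Q = -(Q * A))
    (v : Fin n → ℝ) : Q *ᵥ (A *ᵥ v) = -(A *ᵥ (Q *ᵥ v)) := by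
  rw [mulVec_mulVec, mulVec_mulVec, ← neg_mulVec, h, neg_neg]

variable (hQ : Qᵀ = psJ n s * Q * psJ n s) {zp zm : Fin n → ℝ}
  (hzp : Q *ᵥ zp = zp) (hzm : Q *ᵥ zm = -zm)
include hQ hzp hzm

lemma psInner_add_self_of_eigen :
    psInner n s (zp + zm) (zp + zm) = psInner n s zp zp + psInner n s zm zm := by
  have h := psInner_eq_zero_of_mulVec_eq_neg hQ hzp hzm
  rw [psInner_add_left, psInner_add_right, psInner_add_right, psInner_comm zm zp, h]
  ring

lemma psInner_mulVec_add_self_of_eigen {A : Matrix (Fin n) (Fin n) ℝ}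
    (hA : Aᵀ = psJ n s * A * psJ n s) (hAQ : A * Q = -(Q * A)) :
    psInner n s (A *ᵥ (zp + zm)) (zp + zm) = 2 * psInner n s (A *ᵥ zp) zm := by
  have hAzp : Q *ᵥ (A *ᵥ zp) = -(A *ᵥ zp) := by rw [mulVec_mulVec_of_anticomm hAQ, hzp]
  have hAzm : Q *ᵥ (A *ᵥ zm) = A *ᵥ zm := by
    rw [mulVec_mulVec_of_anticomm hAQ, hzm, mulVec_neg, neg_neg]
  have h₁ : psInner n s (A *ᵥ zp) zp = 0 := by
    rw [psInner_comm]
    exact psInner_eq_zero_of_mulVec_eq_neg hQ hzp hAzp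
  have h₂ : psInner n s (A *ᵥ zm) zm = 0 := psInner_eq_zero_of_mulVec_eq_neg hQ hAzm hzm
  have h₃ : psInner n s (A *ᵥ zm) zp = psInner n s (A *ᵥ zp) zm := by
    rw [psInner_mulVec_left hA, psInner_comm]
  rw [mulVec_add, psInner_add_left, psInner_add_right, psInner_add_right, h₁, h₂, h₃]
  ring

end PseudoInner

theorem mem_Mplus_iff_general (l s m r : ℕ) (hm4 : m % 4 = 0)
    (P : ℕ → Matrix (Fin (2 * l)) (Fin (2 * l)) ℝ)
    (hP : IsCliffordSystem l s m r P)
    (Pm : Matrix (Fin (2 * l)) (Fin (2 * l)) ℝ)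
    (hPm : Pm = ((List.range m).map fun k => P (1 + k)).prod)
    (z zp zm : Fin (2 * l) → ℝ)
    (hzp : Pm *ᵥ zp = zp) (hzm : Pm *ᵥ zm = -zm) (hz : z = zp + zm) :
    (psInner (2 * l) s z z = 1 ∧
      ∀ j ∈ Finset.Icc 1 m, psInner (2 * l) s (P j *ᵥ z) z = 0) ↔
    (psInner (2 * l) s zp zp + psInner (2 * l) s zm zm = 1 ∧
      ∀ j ∈ Finset.Icc 1 m, psInner (2 * l) s (P j *ᵥ zp) zm = 0) := by
  change Pm = prodUpTo P m at hPm
  have hPmT : Pmᵀ = psJ (2 * l) s * Pm * psJ (2 * l) s := by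
    rw [hPm, transpose_prodUpTo psJ_mul_self hP.1 fun i hi j hj => hP.mul_eq_neg_mul hi hj,
      (even_choose_two_of_four_dvd (Nat.dvd_of_mod_eq_zero hm4)).neg_one_pow, one_smul]
  have hPPm (j : ℕ) (hj : j ∈ Finset.Icc 1 m) : P j * Pm = -(Pm * P j) := by
    rw [hPm, mul_prodUpTo_of_mem hj fun i hi hij => hP.mul_eq_neg_mul hj hi hij.symm,
      (Nat.even_iff.mpr (by omega) : Even m).neg_one_pow, one_smul]
  subst hz
  rw [psInner_add_self_of_eigen hPmT hzp hzm]
  refine and_congr_right' (forall₂_congr fun j hj => ?_)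
  rw [psInner_mulVec_add_self_of_eigen hPmT hzp hzm (hP.1 j hj) (hPPm j hj)]
  simp

/-- for a Clifford system with `m ≡ 0 (mod 4)`, `r ≡ 0 (mod 2)`,
`P = P_1 ⋯ P_m`, and `z = z₊ + z₋` with `z₊ ∈ E₊(P)`, `z₋ ∈ E₋(P)`: `z ∈ M₊` iff
`⟨z₊, z₊⟩ + ⟨z₋, z₋⟩ = 1` and `⟨P_j z₊, z₋⟩ = 0` for all `j ∈ {1, …, m}`. -/
theorem mem_Mplus_iff (l s m r : ℕ) (hl : 0 < l) (hs : s ≤ 2 * l)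
    (hm : 2 ≤ m) (hm4 : m % 4 = 0) (hr : r ≤ m) (hr2 : r % 2 = 0)
    (P : ℕ → Matrix (Fin (2 * l)) (Fin (2 * l)) ℝ)
    (hP : IsCliffordSystem l s m r P)
    (Pm : Matrix (Fin (2 * l)) (Fin (2 * l)) ℝ)
    (hPm : Pm = ((List.range m).map fun k => P (1 + k)).prod)
    (z zp zm : Fin (2 * l) → ℝ)
    (hzp : Pm *ᵥ zp = zp) (hzm : Pm *ᵥ zm = -zm) (hz : z = zp + zm) :
    (psInner (2 * l) s z z = 1 ∧
      ∀ j ∈ Finset.Icc 1 m, psInner (2 * l) s (P j *ᵥ z) z = 0) ↔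
    (psInner (2 * l) s zp zp + psInner (2 * l) s zm zm = 1 ∧
      ∀ j ∈ Finset.Icc 1 m, psInner (2 * l) s (P j *ᵥ zp) zm = 0) :=
  mem_Mplus_iff_general l s m r hm4 P hP Pm hPm z zp zm hzp hzm hz
end
end
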